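/- arXiv:2511.01273 — 4 statements merged into one kernel-verified Lean document; each statement's English description precedes it below -/
import Mathlib

section
/- Let X be a compact metric space, R a closed reflexive symmetric transitive binary relation on X, and φ: X → A a continuous surjection onto a finite set A with the discrete topology, such that φ is a strong homomorphism onto a reflexive graph (A, R^A). Suppose for each n there is a finite reflexive graph A_n, a strong homomorphism φ_n : X → A_n, and a map f_n : A_n → A with φ = f_n ∘ φ_n, such that the maximal diameter of fibers of φ_n tends to 0. Then for every k ≥ 1 there exist n and a factorization φ = f ∘ φ_n such that whenever a, b ∈ A_n satisfy a (R^{A_n})^k b, we have f(a) R^A f(b). -/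
def relPow {X : Type*} (R : X → X → Prop) : ℕ → X → X → Prop
  | 0, x, y => x = y
  | (k + 1), x, y => ∃ z, R x z ∧ relPow R k z y

/-- `φ` is a strong homomorphism from `(X, R)` onto `(A, RA)`. -/
def IsStrongHom {X A : Type*} (R : X → X → Prop) (RA : A → A → Prop) (φ : X → A) : Prop :=
  Function.Surjective φ ∧
  (∀ x y, R x y → RA (φ x) (φ y)) ∧
  (∀ a b, RA a b → ∃ x y, R x y ∧ φ x = a ∧ φ y = b)

private lemma lift_chain {X A : Type*} {R : X → X → Prop} {RA : A → A → Prop} {φ : X → A}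
    (hφ : IsStrongHom R RA φ) :
    ∀ (k : ℕ) (a b : A), relPow RA (k + 1) a b →
      ∃ c : Fin (k + 1) → X × X, (∀ i, R (c i).1 (c i).2) ∧
        φ (c 0).1 = a ∧ φ (c (Fin.last k)).2 = b ∧
        ∀ i : Fin k, φ (c i.castSucc).2 = φ (c i.succ).1 := by
  intro k
  induction k with
  | zero =>
      intro a b hab
      obtain ⟨z, haz, hz⟩ := hab
      have hz' : z = b := hz
      subst hz'
      obtain ⟨x, y, hxy, hx, hy⟩ := hφ.2.2 a z haz
      exact ⟨fun _ => (x, y), fun _ => hxy, hx, hy, fun i => i.elim0⟩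
  | succ k' ih =>
      intro a b hab
      obtain ⟨z, haz, hz⟩ := hab
      obtain ⟨c', hc'R, hc'0, hc'last, hc'joint⟩ := ih z b hz
      obtain ⟨x, y, hxy, hx, hy⟩ := hφ.2.2 a z haz
      refine ⟨Fin.cons (x, y) c', ?_, ?_, ?_, ?_⟩
      · intro i
        refine Fin.cases ?_ (fun j => ?_) i
        · simpa using hxy
        · simpa using hc'R j
      · simpa using hx
      · rw [← Fin.succ_last, Fin.cons_succ]; exact hc'last
      · intro i
        refine Fin.cases ?_ (fun j => ?_) i
        · show φ ((Fin.cons (x, y) c' : Fin (k' + 2) → X × X) (Fin.castSucc 0)).2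
            = φ ((Fin.cons (x, y) c' : Fin (k' + 2) → X × X) (Fin.succ 0)).1
          rw [Fin.castSucc_zero, Fin.cons_zero, Fin.cons_succ, hy, hc'0]
        · show φ ((Fin.cons (x, y) c' : Fin (k' + 2) → X × X) (Fin.castSucc j.succ)).2
            = φ ((Fin.cons (x, y) c' : Fin (k' + 2) → X × X) (Fin.succ j.succ)).1
          rw [← Fin.succ_castSucc, Fin.cons_succ, Fin.cons_succ]
          exact hc'joint j

theorem stmt1 {X : Type*} [MetricSpace X] [CompactSpace X]
    (R : X → X → Prop)
    (hclosed : IsClosed {p : X × X | R p.1 p.2})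
    (hrefl : ∀ x, R x x)
    (hsymm : ∀ x y, R x y → R y x)
    (htrans : ∀ x y z, R x y → R y z → R x z)
    {A : Type*} [Fintype A] (RA : A → A → Prop)
    (hRArefl : ∀ a, RA a a) (hRAsymm : ∀ a b, RA a b → RA b a)
    (φ : X → A)
    (hφclopen : ∀ a, IsClopen (φ ⁻¹' {a}))
    (hφ : IsStrongHom R RA φ)
    (An : ℕ → Type) [∀ n, Fintype (An n)]
    (RAn : ∀ n, An n → An n → Prop)
    (hRAnrefl : ∀ n a, RAn n a a)
    (hRAnsymm : ∀ n a b, RAn n a b → RAn n b a)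
    (φn : ∀ n, X → An n)
    (hφnclopen : ∀ n a, IsClopen ((φn n) ⁻¹' {a}))
    (hφn : ∀ n, IsStrongHom R (RAn n) (φn n))
    (fn : ∀ n, An n → A)
    (hfac : ∀ n x, φ x = fn n (φn n x))
    (hdiam : ∀ ε > (0 : ℝ), ∃ N, ∀ n ≥ N, ∀ a : An n, Metric.diam ((φn n) ⁻¹' {a}) < ε)
    (k : ℕ) (hk : 1 ≤ k) :
    ∃ (n : ℕ) (f : An n → A), (∀ x, φ x = f (φn n x)) ∧
      ∀ a b : An n, relPow (RAn n) k a b → RA (f a) (f b) := by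
  obtain ⟨k', rfl⟩ : ∃ k', k = k' + 1 := ⟨k - 1, (Nat.succ_pred_eq_of_pos hk).symm⟩
  by_contra hcon
  push_neg at hcon
  have key : ∀ m : ℕ, ∃ c : Fin (k' + 1) → X × X,
      (∀ i, R (c i).1 (c i).2) ∧
      (∀ i : Fin k', dist (c i.castSucc).2 (c i.succ).1 < 1 / (m + 1)) ∧
      ¬ RA (φ (c 0).1) (φ (c (Fin.last k')).2) := by
    intro m
    have hpos : (0 : ℝ) < 1 / (m + 1) := by positivity
    obtain ⟨N, hN⟩ := hdiam (1 / (m + 1)) hpos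
    obtain ⟨a, b, hab, hnRA⟩ := hcon N (fn N) (hfac N)
    obtain ⟨c, hcR, hc0, hclast, hcjoint⟩ := lift_chain (hφn N) k' a b hab
    refine ⟨c, hcR, ?_, ?_⟩
    · intro i
      have hmem1 : (c i.castSucc).2 ∈ (φn N) ⁻¹' {φn N (c i.succ).1} := by
        simp [Set.mem_preimage, hcjoint i]
      have hmem2 : (c i.succ).1 ∈ (φn N) ⁻¹' {φn N (c i.succ).1} := rfl
      have hb : Bornology.IsBounded ((φn N) ⁻¹' {φn N (c i.succ).1}) :=
        Bornology.IsBounded.subset isCompact_univ.isBounded (Set.subset_univ _)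
      calc dist (c i.castSucc).2 (c i.succ).1
          ≤ Metric.diam ((φn N) ⁻¹' {φn N (c i.succ).1}) :=
            Metric.dist_le_diam_of_mem hb hmem1 hmem2
        _ < 1 / (m + 1) := hN N le_rfl _
    · rw [hfac N, hfac N, hc0, hclast]; exact hnRA
  choose C hCR hCd hCn using key
  obtain ⟨L, -, σ, hσ, hL⟩ :=
    IsCompact.tendsto_subseq (isCompact_univ (X := Fin (k' + 1) → X × X))
      (fun m => Set.mem_univ (C m))
  have hpt : ∀ i, Filter.Tendsto (fun m => C (σ m) i) Filter.atTop (nhds (L i)) :=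
    fun i => (tendsto_pi_nhds.mp hL) i
  have hpt1 : ∀ i, Filter.Tendsto (fun m => (C (σ m) i).1) Filter.atTop (nhds (L i).1) :=
    fun i => (continuous_fst.tendsto (L i)).comp (hpt i)
  have hpt2 : ∀ i, Filter.Tendsto (fun m => (C (σ m) i).2) Filter.atTop (nhds (L i).2) :=
    fun i => (continuous_snd.tendsto (L i)).comp (hpt i)
  have hLR : ∀ i, R (L i).1 (L i).2 := fun i =>
    hclosed.mem_of_tendsto (hpt i) (Filter.Eventually.of_forall (fun m => hCR (σ m) i))
  have hjoint : ∀ i : Fin k', (L i.castSucc).2 = (L i.succ).1 := by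
    intro i
    have h1 : Filter.Tendsto (fun m => dist (C (σ m) i.castSucc).2 (C (σ m) i.succ).1)
        Filter.atTop (nhds (dist (L i.castSucc).2 (L i.succ).1)) :=
      (hpt2 i.castSucc).dist (hpt1 i.succ)
    have h2 : Filter.Tendsto (fun m => dist (C (σ m) i.castSucc).2 (C (σ m) i.succ).1)
        Filter.atTop (nhds 0) := by
      apply squeeze_zero (fun m => dist_nonneg) (fun m => ?_)
        tendsto_one_div_add_atTop_nhds_zero_nat
      have h3 : dist (C (σ m) i.castSucc).2 (C (σ m) i.succ).1 < 1 / (σ m + 1) :=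
        hCd (σ m) i
      have h4 : (1 : ℝ) / (σ m + 1) ≤ 1 / (m + 1) := by
        apply one_div_le_one_div_of_le (by positivity)
        have h5 : m ≤ σ m := hσ.le_apply
        push_cast
        exact_mod_cast by linarith [(Nat.cast_le (α := ℝ)).mpr h5]
      linarith
    exact eq_of_dist_eq_zero (tendsto_nhds_unique h1 h2)
  have htransc : ∀ i : Fin (k' + 1), R (L 0).1 (L i).2 := by
    intro i
    induction i using Fin.induction with
    | zero => exact hLR 0
    | succ j ihj => exact htrans _ _ _ (hjoint j ▸ ihj) (hLR j.succ)
  have hRAfin : RA (φ (L 0).1) (φ (L (Fin.last k')).2) :=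
    hφ.2.1 _ _ (htransc (Fin.last k'))
  have hev1 : ∀ᶠ m in Filter.atTop, φ (C (σ m) 0).1 = φ (L 0).1 := by
    have hop : IsOpen (φ ⁻¹' {φ (L 0).1}) := (hφclopen _).2
    filter_upwards [(hpt1 0).eventually_mem (hop.mem_nhds rfl)] with m hm
    exact hm
  have hev2 : ∀ᶠ m in Filter.atTop,
      φ (C (σ m) (Fin.last k')).2 = φ (L (Fin.last k')).2 := by
    have hop : IsOpen (φ ⁻¹' {φ (L (Fin.last k')).2}) := (hφclopen _).2
    filter_upwards [(hpt2 (Fin.last k')).eventually_mem (hop.mem_nhds rfl)] with m hm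
    exact hm
  obtain ⟨m, hm1, hm2⟩ := (hev1.and hev2).exists
  exact hCn (σ m) (hm1 ▸ hm2 ▸ hRAfin)
end

section
/- Let L, M, M' be finite reflexive path graphs, f : M → L and f' : M' → L epimorphisms, l_-, l_+ the endpoints of L, m_-, m_+ the endpoints of M, m'_-, m'_+ the endpoints of M', with f(m_-) = l_-, f(m_+) = l_+, f'(m'_-) = l_-, f'(m'_+) = l_+. Then there exist a finite reflexive path graph O with endpoints o_-, o_+ and epimorphisms g : O → M, g' : O → M' such that f ∘ g = f' ∘ g', g(o_-) = m_-, g'(o_-) = m'_-, g(o_+) = m_+, g'(o_+) = m'_+. -/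
/-- Adjacency in a reflexive path graph on `ℕ`: `|x - y| ≤ 1`. -/
def adjPath (x y : ℕ) : Prop := x ≤ y + 1 ∧ y ≤ x + 1

/-- `f` is an epimorphism from the reflexive path graph on `[0, nA)` onto the one on
`[0, nB)`. -/
def IsPathEpi (nA nB : ℕ) (f : ℕ → ℕ) : Prop :=
  (∀ a, a < nA → f a < nB) ∧
  (∀ x y, x < nA → y < nA → adjPath x y → adjPath (f x) (f y)) ∧
  (∀ b b', b < nB → b' < nB → adjPath b b' →
    ∃ x y, x < nA ∧ y < nA ∧ adjPath x y ∧ f x = b ∧ f y = b')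

set_option maxHeartbeats 1000000 in
section


/-- crossing lemma: a walk from 0 to mtop crosses every edge upward. -/
lemma walk_cross (T mtop : ℕ) (w : ℕ → ℕ) (h0 : w 0 = 0) (hT : w T = mtop)
    (hstep : ∀ t < T, w (t+1) ≤ w t + 1 ∧ w t ≤ w (t+1) + 1) :
    ∀ a < mtop, ∃ t < T, w t = a ∧ w (t+1) = a + 1 := by
  intro a ha
  have hP0 : w 0 ≤ a := by omega
  set P : ℕ → Prop := fun t => w t ≤ a with hP
  classical
  have hPd : DecidablePred P := Classical.decPred _
  set t0 := Nat.findGreatest P T with ht0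
  have hPt0 : P t0 := Nat.findGreatest_spec (P := P) (Nat.zero_le T) hP0
  have ht0le : t0 ≤ T := Nat.findGreatest_le T
  have ht0lt : t0 < T := by
    by_contra h
    have heq : t0 = T := by omega
    have hTt : w T ≤ a := by simpa only [P, heq] using hPt0
    omega
  have hnot : ¬ P (t0 + 1) := Nat.findGreatest_is_greatest (n := T) (by omega) (by omega)
  have hs := hstep t0 ht0lt
  simp only [P] at hPt0 hnot
  exact ⟨t0, ht0lt, by omega, by omega⟩

lemma walk_hit (T mtop : ℕ) (w : ℕ → ℕ) (h0 : w 0 = 0) (hT : w T = mtop)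
    (hstep : ∀ t < T, w (t+1) ≤ w t + 1 ∧ w t ≤ w (t+1) + 1) :
    ∀ v ≤ mtop, ∃ t ≤ T, w t = v := by
  intro v hv
  rcases Nat.eq_zero_or_pos v with rfl | hvpos
  · exact ⟨0, Nat.zero_le _, h0⟩
  · obtain ⟨t, ht, _, h2⟩ := walk_cross T mtop w h0 hT hstep (v-1) (by omega)
    exact ⟨t+1, by omega, by omega⟩


namespace FPc

variable (mb mc L2 : ℕ) (β γ : ℕ → ℕ)

def VV : Finset (ℕ×ℕ) :=
  (Finset.range (mb+1) ×ˢ Finset.range (mc+1)).filter (fun q => β q.1 = γ q.2)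

lemma mem_VV (q : ℕ×ℕ) : q ∈ VV mb mc β γ ↔ q.1 ≤ mb ∧ q.2 ≤ mc ∧ β q.1 = γ q.2 := by
  simp [VV, Finset.mem_filter, Finset.mem_product, Nat.lt_succ_iff, and_assoc]

def nbr (q : ℕ×ℕ) : Finset (ℕ×ℕ) :=
  (VV mb mc β γ).filter (fun r => (r.1 = q.1 + 1 ∨ q.1 = r.1 + 1) ∧ (r.2 = q.2 + 1 ∨ q.2 = r.2 + 1))

lemma mem_nbr (q r : ℕ×ℕ) : r ∈ nbr mb mc β γ q ↔
    r ∈ VV mb mc β γ ∧ (r.1 = q.1 + 1 ∨ q.1 = r.1 + 1) ∧ (r.2 = q.2 + 1 ∨ q.2 = r.2 + 1) := by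
  simp [nbr]

noncomputable def deg (q : ℕ×ℕ) : ℕ := (nbr mb mc β γ q).card

def CWalk (T : ℕ) (x y : ℕ → ℕ) : Prop :=
  x 0 = 0 ∧ y 0 = 0 ∧ (∀ t ≤ T, (x t, y t) ∈ VV mb mc β γ) ∧
  ∀ t < T, (x (t+1) = x t + 1 ∨ x t = x (t+1) + 1) ∧ (y (t+1) = y t + 1 ∨ y t = y (t+1) + 1)

def Reach (q : ℕ×ℕ) : Prop :=
  ∃ T x y, CWalk mb mc β γ T x y ∧ x T = q.1 ∧ y T = q.2

lemma reach_iff (q : ℕ×ℕ) : Reach mb mc β γ q ↔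
    ∃ T x y, CWalk mb mc β γ T x y ∧ x T = q.1 ∧ y T = q.2 := Iff.rfl

lemma cwalk_iff (T : ℕ) (x y : ℕ → ℕ) : CWalk mb mc β γ T x y ↔
  (x 0 = 0 ∧ y 0 = 0 ∧ (∀ t ≤ T, (x t, y t) ∈ VV mb mc β γ) ∧
  ∀ t < T, (x (t+1) = x t + 1 ∨ x t = x (t+1) + 1) ∧ (y (t+1) = y t + 1 ∨ y t = y (t+1) + 1)) := Iff.rfl

noncomputable def RR : Finset (ℕ×ℕ) :=
  @Finset.filter _ (Reach mb mc β γ) (Classical.decPred _) (VV mb mc β γ)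

lemma mem_RR (q : ℕ×ℕ) : q ∈ RR mb mc β γ ↔ q ∈ VV mb mc β γ ∧ Reach mb mc β γ q := by
  unfold RR
  letI := Classical.decPred (Reach mb mc β γ)
  exact Finset.mem_filter

lemma RR_subset : RR mb mc β γ ⊆ VV mb mc β γ := fun q hq => ((mem_RR mb mc β γ q).1 hq).1

lemma closure {q r : ℕ×ℕ} (hq : q ∈ RR mb mc β γ) (hr : r ∈ nbr mb mc β γ q) :
    r ∈ RR mb mc β γ := by
  rw [mem_RR] at hq ⊢
  rw [mem_nbr] at hr
  obtain ⟨hqV, hre⟩ := hq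
  rw [reach_iff] at hre
  obtain ⟨T, x, y, hcw, hxT, hyT⟩ := hre
  rw [cwalk_iff] at hcw
  obtain ⟨hx0, hy0, hmem, hstep⟩ := hcw
  refine ⟨hr.1, ?_⟩
  rw [reach_iff]
  refine ⟨T+1, (fun t => if t ≤ T then x t else r.1), (fun t => if t ≤ T then y t else r.2),
    (cwalk_iff mb mc β γ _ _ _).2 ⟨by simp [hx0], by simp [hy0], ?_, ?_⟩, by simp, by simp⟩
  · intro t ht
    by_cases h : t ≤ T
    · simpa [h] using hmem t h
    · simpa [h] using hr.1
  · intro t ht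
    by_cases h : t < T
    · have h1 : t ≤ T := by omega
      have h2 : t + 1 ≤ T := by omega
      simpa [h1, h2] using hstep t h
    · have h1 : t = T := by omega
      rw [h1]
      have h2 : ¬ (T + 1 ≤ T) := by omega
      simp only [le_refl, if_pos, h2, if_neg, if_false]
      rw [hxT, hyT]
      exact ⟨hr.2.1, hr.2.2⟩


section DegLemmas

variable (hmb : 1 ≤ mb) (hmc : 1 ≤ mc) (hL : 1 ≤ L2)
variable (hβs : ∀ t < mb, β (t+1) = β t + 1 ∨ β t = β (t+1) + 1)
variable (hγs : ∀ t < mc, γ (t+1) = γ t + 1 ∨ γ t = γ (t+1) + 1)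
variable (hβ0 : β 0 = 0) (hγ0 : γ 0 = 0) (hβT : β mb = L2) (hγT : γ mc = L2)
variable (hβb : ∀ t ≤ mb, β t ≤ L2) (hγb : ∀ t ≤ mc, γ t ≤ L2)

include hmb hmc hβs hγs hβ0 hγ0

lemma deg00 : deg mb mc β γ (0,0) = 1 := by
  have hβ1 : β 1 = 1 := by have h := hβs 0 hmb; norm_num at h; omega
  have hγ1 : γ 1 = 1 := by have h := hγs 0 hmc; norm_num at h; omega
  have : nbr mb mc β γ (0,0) = {(1,1)} := by
    ext ⟨a, b⟩
    rw [mem_nbr, mem_VV]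
    simp only [Finset.mem_singleton, Prod.mk.injEq]
    constructor
    · rintro ⟨⟨_, _, _⟩, h1, h2⟩; omega
    · rintro ⟨rfl, rfl⟩
      exact ⟨⟨hmb, hmc, by omega⟩, by omega, by omega⟩
  rw [deg, this, Finset.card_singleton]

include hL hβT hγT hβb hγb

lemma deg_even (q : ℕ×ℕ) (hq : q ∈ VV mb mc β γ) (h0 : q ≠ (0,0)) (h1 : q ≠ (mb, mc)) :
    Even (deg mb mc β γ q) := by
  obtain ⟨i, j⟩ := q
  rw [mem_VV] at hq
  obtain ⟨hi, hj, hv⟩ := hq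
  replace hi : i ≤ mb := hi
  replace hj : j ≤ mc := hj
  replace hv : β i = γ j := hv
  have key : ∀ a b : ℕ, a ≤ mb → b ≤ mc →
      ((if ((a,b) ∈ VV mb mc β γ) then 1 else 0 : ℕ) = if β a = γ b then 1 else 0) := by
    intro a b ha hb
    by_cases h : β a = γ b
    · rw [if_pos h, if_pos ((mem_VV mb mc β γ (a,b)).2 ⟨ha, hb, h⟩)]
    · rw [if_neg h, if_neg (fun hc => h ((mem_VV mb mc β γ (a,b)).1 hc).2.2)]
  rcases Nat.eq_zero_or_pos i with rfl | hipos
  · -- i = 0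
    have hγj : γ j = 0 := by omega
    have hjpos : 0 < j := by
      rcases Nat.eq_zero_or_pos j with rfl | h
      · exact absurd rfl h0
      · exact h
    have hjlt : j < mc := by
      by_contra h
      have hh : j = mc := by omega
      rw [hh] at hγj; omega
    have hβ1 : β 1 = 1 := by have h := hβs 0 hmb; norm_num at h; omega
    have hCp : γ (j+1) = 1 := by rcases hγs j hjlt with h | h <;> omega
    have hCm : γ (j-1) = 1 := by
      have := hγs (j-1) (by omega)
      have hjj : j - 1 + 1 = j := by omega
      rw [hjj] at this
      rcases this with h | h <;> omega
    have hset : nbr mb mc β γ (0, j) = {(1, j+1), (1, j-1)} := by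
      ext ⟨a, b⟩
      rw [mem_nbr, mem_VV]
      simp only [Finset.mem_insert, Finset.mem_singleton, Prod.mk.injEq]
      constructor
      · rintro ⟨⟨_, _, _⟩, hd1, hd2⟩; omega
      · rintro (⟨rfl, rfl⟩ | ⟨rfl, rfl⟩)
        · exact ⟨⟨hmb, by omega, by omega⟩, by omega, by omega⟩
        · exact ⟨⟨hmb, by omega, by omega⟩, by omega, by omega⟩
    rw [deg, hset]
    rw [Finset.card_insert_of_notMem (by simp [Prod.ext_iff]; omega), Finset.card_singleton]
    exact ⟨1, rfl⟩
  rcases Nat.lt_or_ge i mb with hilt | hige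
  · rcases Nat.eq_zero_or_pos j with rfl | hjpos
    · -- j = 0, 0 < i < mb
      have hβi : β i = 0 := by omega
      have hγ1 : γ 1 = 1 := by have h := hγs 0 hmc; norm_num at h; omega
      have hAp : β (i+1) = 1 := by rcases hβs i hilt with h | h <;> omega
      have hAm : β (i-1) = 1 := by
        have := hβs (i-1) (by omega)
        have hii : i - 1 + 1 = i := by omega
        rw [hii] at this
        rcases this with h | h <;> omega
      have hset : nbr mb mc β γ (i, 0) = {(i+1, 1), (i-1, 1)} := by
        ext ⟨a, b⟩
        rw [mem_nbr, mem_VV]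
        simp only [Finset.mem_insert, Finset.mem_singleton, Prod.mk.injEq]
        constructor
        · rintro ⟨⟨_, _, _⟩, hd1, hd2⟩; omega
        · rintro (⟨rfl, rfl⟩ | ⟨rfl, rfl⟩)
          · exact ⟨⟨by omega, hmc, by omega⟩, by omega, by omega⟩
          · exact ⟨⟨by omega, hmc, by omega⟩, by omega, by omega⟩
      rw [deg, hset]
      rw [Finset.card_insert_of_notMem (by simp [Prod.ext_iff]; omega), Finset.card_singleton]
      exact ⟨1, rfl⟩
    rcases Nat.lt_or_ge j mc with hjlt | hjge
    · -- interior: 0 < i < mb, 0 < j < mc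
      have hA : β (i+1) = β i + 1 ∨ β i = β (i+1) + 1 := hβs i hilt
      have hB : β i = β (i-1) + 1 ∨ β (i-1) = β i + 1 := by
        have := hβs (i-1) (by omega)
        have hii : i - 1 + 1 = i := by omega
        rw [hii] at this
        tauto
      have hC : γ (j+1) = γ j + 1 ∨ γ j = γ (j+1) + 1 := hγs j hjlt
      have hD : γ j = γ (j-1) + 1 ∨ γ (j-1) = γ j + 1 := by
        have := hγs (j-1) (by omega)
        have hjj : j - 1 + 1 = j := by omega
        rw [hjj] at this
        tauto
      have hset : nbr mb mc β γ (i, j) =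
          ({(i+1, j+1), (i+1, j-1), (i-1, j+1), (i-1, j-1)} : Finset (ℕ×ℕ)).filter
            (fun r => r ∈ VV mb mc β γ) := by
        ext ⟨a, b⟩
        rw [mem_nbr, Finset.mem_filter]
        simp only [Finset.mem_insert, Finset.mem_singleton, Prod.mk.injEq]
        constructor
        · rintro ⟨hV, hd1, hd2⟩
          exact ⟨by omega, hV⟩
        · rintro ⟨hC4, hV⟩
          exact ⟨hV, by omega, by omega⟩
      rw [deg, hset, Finset.card_filter]
      rw [Finset.sum_insert (by simp [Prod.ext_iff]; omega),
          Finset.sum_insert (by simp [Prod.ext_iff]; omega),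
          Finset.sum_insert (by simp [Prod.ext_iff]; omega),
          Finset.sum_singleton]
      rw [key (i+1) (j+1) (by omega) (by omega), key (i+1) (j-1) (by omega) (by omega),
          key (i-1) (j+1) (by omega) (by omega), key (i-1) (j-1) (by omega) (by omega)]
      rw [Nat.even_iff]
      rcases hA with hA | hA <;> rcases hB with hB | hB <;> rcases hC with hC | hC <;>
        rcases hD with hD | hD <;> split_ifs <;> omega
    · -- j = mc, 0 < i < mb
      have hjeq : j = mc := by omega
      have hγjL : γ j = L2 := by rw [hjeq]; exact hγT
      have hβi : β i = L2 := by omega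
      have hγm : γ (j-1) + 1 = L2 := by
        have h := hγs (j-1) (by omega)
        have hjj : j - 1 + 1 = j := by omega
        rw [hjj] at h
        have := hγb (j-1) (by omega)
        omega
      have hApv : β (i+1) + 1 = L2 := by
        have h := hβs i hilt
        have := hβb (i+1) (by omega)
        omega
      have hAmv : β (i-1) + 1 = L2 := by
        have h := hβs (i-1) (by omega)
        have hii : i - 1 + 1 = i := by omega
        rw [hii] at h
        have := hβb (i-1) (by omega)
        omega
      have hset : nbr mb mc β γ (i, j) = {(i+1, j-1), (i-1, j-1)} := by
        ext ⟨a, b⟩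
        rw [mem_nbr, mem_VV]
        simp only [Finset.mem_insert, Finset.mem_singleton, Prod.mk.injEq]
        constructor
        · rintro ⟨⟨ha, hb, _⟩, hd1, hd2⟩; omega
        · rintro (⟨rfl, rfl⟩ | ⟨rfl, rfl⟩)
          · exact ⟨⟨by omega, by omega, by omega⟩, by omega, by omega⟩
          · exact ⟨⟨by omega, by omega, by omega⟩, by omega, by omega⟩
      rw [deg, hset]
      rw [Finset.card_insert_of_notMem (by simp [Prod.ext_iff]; omega), Finset.card_singleton]
      exact ⟨1, rfl⟩
  · -- i = mb
    have hieq : i = mb := by omega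
    have hβiL : β i = L2 := by rw [hieq]; exact hβT
    have hγjL : γ j = L2 := by omega
    have hjpos : 0 < j := by
      by_contra h
      have hh : j = 0 := by omega
      rw [hh] at hγjL; omega
    have hjlt : j < mc := by
      by_contra h
      have hh : j = mc := by omega
      exact h1 (by rw [hieq, hh])
    have hBm : β (i-1) + 1 = L2 := by
      have h := hβs (i-1) (by omega)
      have hii : i - 1 + 1 = i := by omega
      rw [hii] at h
      have := hβb (i-1) (by omega)
      omega
    have hCp : γ (j+1) + 1 = L2 := by
      have h := hγs j hjlt
      have := hγb (j+1) (by omega)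
      omega
    have hCm : γ (j-1) + 1 = L2 := by
      have h := hγs (j-1) (by omega)
      have hjj : j - 1 + 1 = j := by omega
      rw [hjj] at h
      have := hγb (j-1) (by omega)
      omega
    have hset : nbr mb mc β γ (i, j) = {(i-1, j+1), (i-1, j-1)} := by
      ext ⟨a, b⟩
      rw [mem_nbr, mem_VV]
      simp only [Finset.mem_insert, Finset.mem_singleton, Prod.mk.injEq]
      constructor
      · rintro ⟨⟨ha, hb, _⟩, hd1, hd2⟩; omega
      · rintro (⟨rfl, rfl⟩ | ⟨rfl, rfl⟩)
        · exact ⟨⟨by omega, by omega, by omega⟩, by omega, by omega⟩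
        · exact ⟨⟨by omega, by omega, by omega⟩, by omega, by omega⟩
    rw [deg, hset]
    rw [Finset.card_insert_of_notMem (by simp [Prod.ext_iff]; omega), Finset.card_singleton]
    exact ⟨1, rfl⟩

end DegLemmas


theorem fp_connect (hmb : 1 ≤ mb) (hmc : 1 ≤ mc) (hL : 1 ≤ L2)
    (hβs : ∀ t < mb, β (t+1) = β t + 1 ∨ β t = β (t+1) + 1)
    (hγs : ∀ t < mc, γ (t+1) = γ t + 1 ∨ γ t = γ (t+1) + 1)
    (hβ0 : β 0 = 0) (hγ0 : γ 0 = 0) (hβT : β mb = L2) (hγT : γ mc = L2)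
    (hβb : ∀ t ≤ mb, β t ≤ L2) (hγb : ∀ t ≤ mc, γ t ≤ L2) :
    ∃ (T : ℕ) (x y : ℕ → ℕ), x 0 = 0 ∧ y 0 = 0 ∧ x T = mb ∧ y T = mc ∧
      (∀ t ≤ T, x t ≤ mb ∧ y t ≤ mc ∧ β (x t) = γ (y t)) ∧
      (∀ t < T, (x (t+1) = x t + 1 ∨ x t = x (t+1) + 1) ∧
        (y (t+1) = y t + 1 ∨ y t = y (t+1) + 1)) := by
  classical
  have h00V : (0,0) ∈ VV mb mc β γ := by
    rw [mem_VV]; exact ⟨Nat.zero_le _, Nat.zero_le _, (show β 0 = γ 0 by omega)⟩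
  have h00R : (0,0) ∈ RR mb mc β γ := by
    rw [mem_RR]
    refine ⟨h00V, ?_⟩
    rw [reach_iff]
    exact ⟨0, fun _ => 0, fun _ => 0,
      (cwalk_iff mb mc β γ 0 _ _).2 ⟨rfl, rfl, fun t _ => h00V, fun t ht => by omega⟩, rfl, rfl⟩
  have hfin : (mb, mc) ∈ RR mb mc β γ := by
    by_contra hmp
    set E : Finset ((ℕ×ℕ)×(ℕ×ℕ)) :=
      (RR mb mc β γ).biUnion (fun q => (nbr mb mc β γ q).image (fun r => (q, r))) with hE
    have memE : ∀ e : (ℕ×ℕ)×(ℕ×ℕ), e ∈ E ↔ e.1 ∈ RR mb mc β γ ∧ e.2 ∈ nbr mb mc β γ e.1 := by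
      intro e
      rw [hE, Finset.mem_biUnion]
      constructor
      · rintro ⟨q, hq, he⟩
        rw [Finset.mem_image] at he
        obtain ⟨r, hr, rfl⟩ := he
        exact ⟨hq, hr⟩
      · rintro ⟨h1, h2⟩
        refine ⟨e.1, h1, ?_⟩
        rw [Finset.mem_image]
        exact ⟨e.2, h2, rfl⟩
    have hcard : E.card = ∑ q ∈ RR mb mc β γ, deg mb mc β γ q := by
      rw [hE, Finset.card_biUnion]
      · refine Finset.sum_congr rfl (fun q hq => ?_)
        rw [Finset.card_image_of_injective]
        · rfl
        · intro a b hab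
          simpa using congrArg Prod.snd hab
      · intro q hq q' hq' hne
        rw [Function.onFun, Finset.disjoint_left]
        intro e he he'
        rw [Finset.mem_image] at he he'
        obtain ⟨r, _, rfl⟩ := he
        obtain ⟨r', _, h⟩ := he'
        exact hne (congrArg Prod.fst h).symm
    have hz : ((E.card : ZMod 2)) = 0 := by
      rw [Finset.card_eq_sum_ones E]
      push_cast
      refine Finset.sum_involution (fun e _ => (e.2, e.1)) (fun e he => by decide) ?_ ?_ ?_
      · intro e he _
        rw [memE] at he
        have hd := ((mem_nbr mb mc β γ e.1 e.2).1 he.2).2.1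
        intro hcon
        have h1 : e.2 = e.1 := congrArg Prod.fst hcon
        have h2 : e.2.1 = e.1.1 := congrArg Prod.fst h1
        omega
      · intro e he
        rw [memE] at he
        show (e.2, e.1) ∈ E
        rw [memE]
        have h2 := (mem_nbr mb mc β γ e.1 e.2).1 he.2
        constructor
        · show e.2 ∈ RR mb mc β γ
          exact closure mb mc β γ he.1 he.2
        · show e.1 ∈ nbr mb mc β γ e.2
          rw [mem_nbr]
          refine ⟨RR_subset mb mc β γ he.1, ?_, ?_⟩
          · rcases h2.2.1 with h | h
            · right; omega
            · left; omega
          · rcases h2.2.2 with h | h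
            · right; omega
            · left; omega
      · intro e he
        rfl
    have hodd : (∑ q ∈ RR mb mc β γ, ((deg mb mc β γ q : ℕ) : ZMod 2)) = 1 := by
      rw [Finset.sum_eq_single_of_mem (0,0) h00R]
      · rw [deg00 mb mc β γ hmb hmc hβs hγs hβ0 hγ0]
        norm_num
      · intro b hb hne
        have hbV := RR_subset mb mc β γ hb
        have hbne : b ≠ (mb, mc) := fun h => hmp (h ▸ hb)
        obtain ⟨k, hk⟩ := deg_even mb mc L2 β γ hmb hmc hL hβs hγs hβ0 hγ0 hβT hγT hβb hγb
          b hbV hne hbne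
        rw [hk]
        push_cast
        rw [show ((k : ZMod 2) + k) = 2 * k by ring, show (2 : ZMod 2) = 0 from rfl]
        ring
    rw [hcard] at hz
    push_cast at hz
    rw [hodd] at hz
    exact absurd hz (by decide)
  rw [mem_RR] at hfin
  obtain ⟨-, hre⟩ := hfin
  rw [reach_iff] at hre
  obtain ⟨T, x, y, hcw, hxT, hyT⟩ := hre
  rw [cwalk_iff] at hcw
  obtain ⟨hx0, hy0, hmem, hstep⟩ := hcw
  refine ⟨T, x, y, hx0, hy0, hxT, hyT, ?_, hstep⟩
  intro t ht
  have := (mem_VV mb mc β γ (x t, y t)).1 (hmem t ht)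
  exact ⟨this.1, this.2.1, this.2.2⟩

end FPc



namespace Strictify

def StepRel (p q : ℕ×ℕ) : Prop :=
  (q.1 = p.1 ∨ q.1 = p.1 + 1) ∧ (q.2 = p.2 + 1 ∨ p.2 = q.2 + 1)

def blk (b : ℕ → ℕ) (i o : ℕ) : List (ℕ×ℕ) :=
  if b (i+1) = b i + 1 then
    (if o = 0 then [(i, 5*b i+1), (i, 5*b i+2), (i, 5*b i+3), (i, 5*b i+4)] else []) ++
      [(i+1, 5*b i+5)]
  else if b i = b (i+1) + 1 then
    (if o = 0 then [] else [(i, 5*b i+3), (i, 5*b i+2), (i, 5*b i+1), (i, 5*b i)]) ++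
      [(i+1, 5*b i - 1)]
  else
    if o = 0 then [(i, 5*b i+1), (i+1, 5*b i)] else [(i, 5*b i+3), (i+1, 5*b i+4)]

def nxo (b : ℕ → ℕ) (i o : ℕ) : ℕ :=
  if b (i+1) = b i + 1 then 0 else if b i = b (i+1) + 1 then 4 else o

def traj (b : ℕ → ℕ) : ℕ → List (ℕ×ℕ) × ℕ
  | 0 => ([(0,0)], 0)
  | i+1 => ((traj b i).1 ++ blk b i (traj b i).2, nxo b i (traj b i).2)

def tailC (b : ℕ → ℕ) (m o : ℕ) : List (ℕ×ℕ) :=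
  if o = 0 then [(m, 5*b m+1), (m, 5*b m+2), (m, 5*b m+3), (m, 5*b m+4)] else []

def full (b : ℕ → ℕ) (m : ℕ) : List (ℕ×ℕ) := (traj b m).1 ++ tailC b m (traj b m).2

lemma spec_of_list (b : ℕ → ℕ) (i o no : ℕ) (L : List (ℕ×ℕ))
    (hne : L ≠ [])
    (hno : no = 0 ∨ no = 4)
    (hlast : L.getLast? = some (i+1, 5 * b (i+1) + no))
    (hmem : ∀ p ∈ L, (p.1 = i ∨ p.1 = i+1) ∧ 5 * b p.1 ≤ p.2 ∧ p.2 ≤ 5 * b p.1 + 4)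
    (hch : List.Chain' StepRel L)
    (hhd : ∀ q ∈ L.head?, StepRel (i, 5 * b i + o) q) :
    L ≠ [] ∧ (no = 0 ∨ no = 4) ∧ L.getLast? = some (i+1, 5 * b (i+1) + no) ∧
    (∀ p ∈ L, (p.1 = i ∨ p.1 = i+1) ∧ 5 * b p.1 ≤ p.2 ∧ p.2 ≤ 5 * b p.1 + 4) ∧
    List.Chain' StepRel L ∧ (∀ q ∈ L.head?, StepRel (i, 5 * b i + o) q) :=
  ⟨hne, hno, hlast, hmem, hch, hhd⟩

lemma blk_spec (b : ℕ → ℕ) (i o : ℕ) (ho : o = 0 ∨ o = 4) (hadj : adjPath (b i) (b (i+1))) :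
    blk b i o ≠ [] ∧
    (nxo b i o = 0 ∨ nxo b i o = 4) ∧
    (blk b i o).getLast? = some (i+1, 5 * b (i+1) + nxo b i o) ∧
    (∀ p ∈ blk b i o, (p.1 = i ∨ p.1 = i+1) ∧ 5 * b p.1 ≤ p.2 ∧ p.2 ≤ 5 * b p.1 + 4) ∧
    List.Chain' StepRel (blk b i o) ∧
    (∀ q ∈ (blk b i o).head?, StepRel (i, 5 * b i + o) q) := by
  obtain ⟨h1, h2⟩ := hadj
  rcases Nat.lt_trichotomy (b i) (b (i+1)) with hc | hc | hc
  · -- up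
    have hup : b (i+1) = b i + 1 := by omega
    have e2 : nxo b i o = 0 := by rw [nxo, if_pos hup]
    rcases ho with rfl | rfl
    · have e1 : blk b i 0 =
          [(i, 5*b i+1), (i, 5*b i+2), (i, 5*b i+3), (i, 5*b i+4), (i+1, 5*b i+5)] := by
        rw [blk, if_pos hup]; norm_num
      rw [e1, e2]
      refine spec_of_list b i 0 0 _ (by simp) (by norm_num) (by simp [Prod.ext_iff]; omega) ?_ ?_ ?_
      · intro p hp
        simp only [List.mem_cons, List.not_mem_nil, or_false] at hp
        rcases hp with rfl|rfl|rfl|rfl|rfl <;> simp <;> omega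
      · simp only [List.Chain', List.isChain_cons_cons, List.isChain_singleton, StepRel, and_true]; norm_num
      · simp [StepRel]
    · have e1 : blk b i 4 = [(i+1, 5*b i+5)] := by
        rw [blk, if_pos hup]; norm_num
      rw [e1, e2]
      refine spec_of_list b i 4 0 _ (by simp) (by norm_num) (by simp [Prod.ext_iff]; omega) ?_ ?_ ?_
      · intro p hp
        simp only [List.mem_cons, List.not_mem_nil, or_false] at hp
        rcases hp with rfl <;> simp <;> omega
      · simp [List.Chain', List.isChain_singleton]
      · simp [StepRel]
  · -- flat
    have hne1 : ¬ (b (i+1) = b i + 1) := by omega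
    have hne2 : ¬ (b i = b (i+1) + 1) := by omega
    have hbe : b (i+1) = b i := by omega
    have e2 : nxo b i o = o := by rw [nxo, if_neg hne1, if_neg hne2]
    rcases ho with rfl | rfl
    · have e1 : blk b i 0 = [(i, 5*b i+1), (i+1, 5*b i)] := by
        rw [blk, if_neg hne1, if_neg hne2]; norm_num
      rw [e1, e2]
      refine spec_of_list b i 0 0 _ (by simp) (by norm_num) (by simp [Prod.ext_iff]; omega) ?_ ?_ ?_
      · intro p hp
        simp only [List.mem_cons, List.not_mem_nil, or_false] at hp
        rcases hp with rfl|rfl <;> simp [hbe] <;> omega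
      · simp only [List.Chain', List.isChain_cons_cons, List.isChain_singleton, StepRel, and_true]; norm_num
      · simp [StepRel]
    · have e1 : blk b i 4 = [(i, 5*b i+3), (i+1, 5*b i+4)] := by
        rw [blk, if_neg hne1, if_neg hne2]; norm_num
      rw [e1, e2]
      refine spec_of_list b i 4 4 _ (by simp) (by norm_num) (by simp [Prod.ext_iff]; omega) ?_ ?_ ?_
      · intro p hp
        simp only [List.mem_cons, List.not_mem_nil, or_false] at hp
        rcases hp with rfl|rfl <;> simp [hbe] <;> omega
      · simp only [List.Chain', List.isChain_cons_cons, List.isChain_singleton, StepRel, and_true]; norm_num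
      · simp [StepRel]
  · -- down
    have hdn : b i = b (i+1) + 1 := by omega
    have hne1 : ¬ (b (i+1) = b i + 1) := by omega
    have e2 : nxo b i o = 4 := by rw [nxo, if_neg hne1, if_pos hdn]
    rcases ho with rfl | rfl
    · have e1 : blk b i 0 = [(i+1, 5*b i - 1)] := by
        rw [blk, if_neg hne1, if_pos hdn]; norm_num
      rw [e1, e2]
      refine spec_of_list b i 0 4 _ (by simp) (by norm_num) (by simp [Prod.ext_iff]; omega) ?_ ?_ ?_
      · intro p hp
        simp only [List.mem_cons, List.not_mem_nil, or_false] at hp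
        rcases hp with rfl <;> simp <;> omega
      · simp [List.Chain', List.isChain_singleton]
      · simp [StepRel]; omega
    · have e1 : blk b i 4 = [(i, 5*b i+3), (i, 5*b i+2), (i, 5*b i+1), (i, 5*b i), (i+1, 5*b i - 1)] := by
        rw [blk, if_neg hne1, if_pos hdn]; norm_num
      rw [e1, e2]
      refine spec_of_list b i 4 4 _ (by simp) (by norm_num) (by simp [Prod.ext_iff]; omega) ?_ ?_ ?_
      · intro p hp
        simp only [List.mem_cons, List.not_mem_nil, or_false] at hp
        rcases hp with rfl|rfl|rfl|rfl|rfl <;> simp <;> omega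
      · simp only [List.Chain', List.isChain_cons_cons, List.isChain_singleton, StepRel, and_true]; norm_num; omega
      · simp [StepRel]


lemma traj_spec (b : ℕ → ℕ) (m : ℕ) (hb : ∀ k < m, adjPath (b k) (b (k+1))) (hb0 : b 0 = 0) :
    ∀ i, i ≤ m →
    ((traj b i).2 = 0 ∨ (traj b i).2 = 4) ∧
    (traj b i).1 ≠ [] ∧
    (traj b i).1.head? = some (0, 0) ∧
    (traj b i).1.getLast? = some (i, 5 * b i + (traj b i).2) ∧
    (∀ p ∈ (traj b i).1, p.1 ≤ i ∧ 5 * b p.1 ≤ p.2 ∧ p.2 ≤ 5 * b p.1 + 4) ∧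
    List.Chain' StepRel (traj b i).1 := by
  intro i
  induction i with
  | zero =>
    intro _
    refine ⟨Or.inl rfl, by simp [traj], by simp [traj], by simp [traj, hb0], ?_, by simp [traj, List.Chain', List.isChain_singleton]⟩
    intro p hp
    simp only [traj, List.mem_singleton] at hp
    subst hp
    simp [hb0]
  | succ i ih =>
    intro hi1
    obtain ⟨ho, hne, hhd, hlast, hmem, hch⟩ := ih (by omega)
    obtain ⟨bne, bno, blast, bmem, bch, bhd⟩ := blk_spec b i (traj b i).2 ho (hb i (by omega))
    have htr : traj b (i+1) = ((traj b i).1 ++ blk b i (traj b i).2, nxo b i (traj b i).2) := rfl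
    rw [htr]
    refine ⟨bno, by simp [hne], ?_, ?_, ?_, ?_⟩
    · rw [List.head?_append_of_ne_nil _ hne]; exact hhd
    · rw [List.getLast?_append_of_ne_nil _ bne]; exact blast
    · intro p hp
      rcases List.mem_append.1 hp with h | h
      · obtain ⟨ha, hb', hc'⟩ := hmem p h
        exact ⟨by omega, hb', hc'⟩
      · obtain ⟨ha, hb', hc'⟩ := bmem p h
        exact ⟨by omega, hb', hc'⟩
    · rw [List.Chain', List.isChain_append]
      refine ⟨hch, bch, ?_⟩
      intro x hx y hy
      rw [hlast, Option.mem_some_iff] at hx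
      subst hx
      exact bhd y hy


lemma full_spec (b : ℕ → ℕ) (m : ℕ) (hb : ∀ k < m, adjPath (b k) (b (k+1))) (hb0 : b 0 = 0) :
    full b m ≠ [] ∧
    (full b m).head? = some (0, 0) ∧
    (full b m).getLast? = some (m, 5 * b m + 4) ∧
    (∀ p ∈ full b m, p.1 ≤ m ∧ 5 * b p.1 ≤ p.2 ∧ p.2 ≤ 5 * b p.1 + 4) ∧
    List.Chain' StepRel (full b m) := by
  obtain ⟨ho, hne, hhd, hlast, hmem, hch⟩ := traj_spec b m hb hb0 m le_rfl
  rw [full]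
  rcases ho with ho | ho
  · -- tail has 4 entries
    have ht : tailC b m (traj b m).2 =
        [(m, 5*b m+1), (m, 5*b m+2), (m, 5*b m+3), (m, 5*b m+4)] := by
      rw [tailC, if_pos ho]
    rw [ht]
    refine ⟨by simp [hne], ?_, ?_, ?_, ?_⟩
    · rw [List.head?_append_of_ne_nil _ hne]; exact hhd
    · rw [List.getLast?_append_of_ne_nil _ (by simp)]; simp
    · intro p hp
      rcases List.mem_append.1 hp with h | h
      · exact hmem p h
      · simp only [List.mem_cons, List.not_mem_nil, or_false] at h
        rcases h with rfl|rfl|rfl|rfl <;> simp <;> omega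
    · rw [List.Chain', List.isChain_append]
      refine ⟨hch, ?_, ?_⟩
      · simp only [List.Chain', List.isChain_cons_cons, List.isChain_singleton, StepRel, and_true]; norm_num
      · intro x hx y hy
        rw [hlast, Option.mem_some_iff] at hx
        subst hx
        simp only [List.head?_cons, Option.mem_some_iff] at hy
        subst hy
        rw [ho]
        exact ⟨Or.inl rfl, Or.inl rfl⟩
  · have ht : tailC b m (traj b m).2 = [] := by
      rw [tailC, ho]; norm_num
    rw [ht, List.append_nil]
    rw [ho] at hlast
    exact ⟨hne, hhd, hlast, fun p hp => (hmem p hp), hch⟩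

theorem strictify (m : ℕ) (b : ℕ → ℕ) (hb : ∀ k < m, adjPath (b k) (b (k+1))) (hb0 : b 0 = 0) :
    ∃ (T : ℕ) (κ β : ℕ → ℕ), 1 ≤ T ∧ κ 0 = 0 ∧ κ T = m ∧ β 0 = 0 ∧ β T = 5 * b m + 4 ∧
      (∀ s ≤ T, κ s ≤ m ∧ 5 * b (κ s) ≤ β s ∧ β s ≤ 5 * b (κ s) + 4) ∧
      (∀ s < T, (κ (s+1) = κ s ∨ κ (s+1) = κ s + 1) ∧
        (β (s+1) = β s + 1 ∨ β s = β (s+1) + 1)) := by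
  obtain ⟨hne, hhd, hlast, hmem, hch⟩ := full_spec b m hb hb0
  set L := full b m with hL
  set T := L.length - 1 with hT
  have hlen : 1 ≤ L.length := by
    rcases L with _ | ⟨a, l⟩
    · exact absurd rfl hne
    · simp
  set w : ℕ → ℕ×ℕ := fun s => L.getD s (m, 5 * b m + 4) with hw
  have hgetD : ∀ s (h : s < L.length), w s = L[s] := by
    intro s h
    rw [hw]
    simp [List.getD_eq_getElem?_getD, List.getElem?_eq_getElem h]
  have hw0 : w 0 = (0, 0) := by
    rw [hgetD 0 (by omega)]
    have := @List.head?_eq_getElem? _ L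
    rw [hhd, List.getElem?_eq_getElem (by omega)] at this
    exact (Option.some_inj.1 this).symm
  have hwT : w T = (m, 5 * b m + 4) := by
    rw [hgetD T (by omega)]
    have h2 := @List.getLast?_eq_getElem? _ L
    rw [hlast, List.getElem?_eq_getElem (show L.length - 1 < L.length by omega)] at h2
    exact (Option.some_inj.1 h2).symm
  have hwmem : ∀ s, s ≤ T → w s ∈ L := by
    intro s hs
    rw [hgetD s (by omega)]
    exact List.getElem_mem _
  have hstep : ∀ s, s < T → StepRel (w s) (w (s+1)) := by
    intro s hs
    rw [hgetD s (by omega), hgetD (s+1) (by omega)]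
    have := List.isChain_iff_getElem.1 hch s (by omega)
    simpa [List.get_eq_getElem] using this
  have hT1 : 1 ≤ T := by
    by_contra h
    have : T = 0 := by omega
    rw [this] at hwT
    rw [hw0] at hwT
    have := congrArg Prod.snd hwT
    simp at this
  refine ⟨T, fun s => (w s).1, fun s => (w s).2, hT1,
    (by show (w 0).1 = 0; rw [hw0]),
    (by show (w T).1 = m; rw [hwT]),
    (by show (w 0).2 = 0; rw [hw0]),
    (by show (w T).2 = 5 * b m + 4; rw [hwT]), ?_, ?_⟩
  · intro s hs
    obtain ⟨h1, h2, h3⟩ := hmem (w s) (hwmem s hs)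
    exact ⟨h1, h2, h3⟩
  · intro s hs
    obtain ⟨h1, h2⟩ := hstep s hs
    constructor
    · rcases h1 with h | h
      · left; exact h
      · right; exact h
    · exact h2

end Strictify

end

/-- Endpoint-preserving amalgamation of path-graph epimorphisms (Lemma B.2).
Paths are identified with `[0, n)`; the endpoints are `0` and `n - 1`. -/

theorem stmt11 (nL nM nM' : ℕ) (hnL : 1 ≤ nL) (hnM : 1 ≤ nM) (hnM' : 1 ≤ nM')
    (f f' : ℕ → ℕ)
    (hf : IsPathEpi nM nL f) (hf' : IsPathEpi nM' nL f')
    (hfm : f 0 = 0) (hfp : f (nM - 1) = nL - 1)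
    (hfm' : f' 0 = 0) (hfp' : f' (nM' - 1) = nL - 1) :
    ∃ (nO : ℕ) (g g' : ℕ → ℕ), 1 ≤ nO ∧
      IsPathEpi nO nM g ∧ IsPathEpi nO nM' g' ∧
      (∀ j, j < nO → f (g j) = f' (g' j)) ∧
      g 0 = 0 ∧ g' 0 = 0 ∧ g (nO - 1) = nM - 1 ∧ g' (nO - 1) = nM' - 1 := by
  obtain ⟨hfv, hfhom, hfsur⟩ := hf
  obtain ⟨hfv', hfhom', hfsur'⟩ := hf'
  have hbw : ∀ k < nM - 1, adjPath (f k) (f (k+1)) := by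
    intro k hk
    exact hfhom k (k+1) (by omega) (by omega) ⟨by omega, by omega⟩
  have hbw' : ∀ k < nM' - 1, adjPath (f' k) (f' (k+1)) := by
    intro k hk
    exact hfhom' k (k+1) (by omega) (by omega) ⟨by omega, by omega⟩
  obtain ⟨Tb, κb, βb, hTb1, hκb0, hκbT, hβb0, hβbT, hfib, hstepb⟩ :=
    Strictify.strictify (nM-1) f hbw hfm
  obtain ⟨Tc, κc, γc, hTc1, hκc0, hκcT, hγc0, hγcT, hfib', hstepc⟩ :=
    Strictify.strictify (nM'-1) f' hbw' hfm'
  set L2 := 5 * (nL - 1) + 4 with hL2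
  have hβbT' : βb Tb = L2 := by rw [hβbT, hfp]
  have hγcT' : γc Tc = L2 := by rw [hγcT, hfp']
  have hfbound : ∀ a, a ≤ nM - 1 → f a ≤ nL - 1 := by
    intro a ha
    have := hfv a (by omega)
    omega
  have hfbound' : ∀ a, a ≤ nM' - 1 → f' a ≤ nL - 1 := by
    intro a ha
    have := hfv' a (by omega)
    omega
  have hβbb : ∀ s ≤ Tb, βb s ≤ L2 := by
    intro s hs
    obtain ⟨h1, h2, h3⟩ := hfib s hs
    have := hfbound (κb s) h1
    omega
  have hγcb : ∀ s ≤ Tc, γc s ≤ L2 := by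
    intro s hs
    obtain ⟨h1, h2, h3⟩ := hfib' s hs
    have := hfbound' (κc s) h1
    omega
  obtain ⟨T, x, y, hx0, hy0, hxT, hyT, hmemT, hstepT⟩ :=
    FPc.fp_connect Tb Tc L2 βb γc hTb1 hTc1 (by omega)
      (fun t ht => (hstepb t ht).2) (fun t ht => (hstepc t ht).2)
      hβb0 hγc0 hβbT' hγcT' hβbb hγcb
  refine ⟨T + 1, fun t => κb (x t), fun t => κc (y t), by omega, ?_, ?_, ?_, ?_, ?_, ?_, ?_⟩
  case _ => -- IsPathEpi for g
    have hgstep : ∀ t < T, κb (x (t+1)) ≤ κb (x t) + 1 ∧ κb (x t) ≤ κb (x (t+1)) + 1 := by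
      intro t ht
      have hxb : x t ≤ Tb := (hmemT t (by omega)).1
      have hxb1 : x (t+1) ≤ Tb := (hmemT (t+1) (by omega)).1
      rcases (hstepT t ht).1 with h | h
      · have h2 := (hstepb (x t) (by omega)).1
        rw [h]
        rcases h2 with h2 | h2 <;> omega
      · have h2 := (hstepb (x (t+1)) (by omega)).1
        rw [h]
        rcases h2 with h2 | h2 <;> omega
    have hg0 : κb (x 0) = 0 := by rw [hx0, hκb0]
    have hgT : κb (x T) = nM - 1 := by rw [hxT, hκbT]
    refine ⟨?_, ?_, ?_⟩
    · intro a ha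
      show κb (x a) < nM
      have h1 := (hfib (x a) (hmemT a (by omega)).1).1
      omega
    · intro u v hu hv hadj
      obtain ⟨ha1, ha2⟩ := hadj
      show adjPath (κb (x u)) (κb (x v))
      rcases Nat.lt_trichotomy u v with h | h | h
      · have hv' : v = u + 1 := by omega
        have hs := hgstep u (by omega)
        rw [hv']
        exact ⟨by omega, by omega⟩
      · rw [h]; exact ⟨by omega, by omega⟩
      · have hu' : u = v + 1 := by omega
        have hs := hgstep v (by omega)
        rw [hu']
        exact ⟨by omega, by omega⟩
    · intro b1 b2 hb1 hb2 hadj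
      obtain ⟨ha1, ha2⟩ := hadj
      rcases Nat.lt_trichotomy b1 b2 with h | h | h
      · have hb2' : b2 = b1 + 1 := by omega
        obtain ⟨t, ht, h1, h2⟩ := walk_cross T (nM-1) (fun t => κb (x t)) hg0 hgT hgstep b1 (by omega)
        exact ⟨t, t+1, by omega, by omega, ⟨by omega, by omega⟩, h1,
          by show κb (x (t+1)) = b2; omega⟩
      · obtain ⟨t, ht, h1⟩ := walk_hit T (nM-1) (fun t => κb (x t)) hg0 hgT hgstep b1 (by omega)
        exact ⟨t, t, by omega, by omega, ⟨by omega, by omega⟩, h1,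
          by show κb (x t) = b2; omega⟩
      · have hb1' : b1 = b2 + 1 := by omega
        obtain ⟨t, ht, h1, h2⟩ := walk_cross T (nM-1) (fun t => κb (x t)) hg0 hgT hgstep b2 (by omega)
        exact ⟨t+1, t, by omega, by omega, ⟨by omega, by omega⟩,
          by show κb (x (t+1)) = b1; omega, h1⟩
  case _ => -- IsPathEpi for g'
    have hgstep : ∀ t < T, κc (y (t+1)) ≤ κc (y t) + 1 ∧ κc (y t) ≤ κc (y (t+1)) + 1 := by
      intro t ht
      have hxb : y t ≤ Tc := (hmemT t (by omega)).2.1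
      have hxb1 : y (t+1) ≤ Tc := (hmemT (t+1) (by omega)).2.1
      rcases (hstepT t ht).2 with h | h
      · have h2 := (hstepc (y t) (by omega)).1
        rw [h]
        rcases h2 with h2 | h2 <;> omega
      · have h2 := (hstepc (y (t+1)) (by omega)).1
        rw [h]
        rcases h2 with h2 | h2 <;> omega
    have hg0 : κc (y 0) = 0 := by rw [hy0, hκc0]
    have hgT : κc (y T) = nM' - 1 := by rw [hyT, hκcT]
    refine ⟨?_, ?_, ?_⟩
    · intro a ha
      show κc (y a) < nM'
      have h1 := (hfib' (y a) (hmemT a (by omega)).2.1).1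
      omega
    · intro u v hu hv hadj
      obtain ⟨ha1, ha2⟩ := hadj
      show adjPath (κc (y u)) (κc (y v))
      rcases Nat.lt_trichotomy u v with h | h | h
      · have hv' : v = u + 1 := by omega
        have hs := hgstep u (by omega)
        rw [hv']
        exact ⟨by omega, by omega⟩
      · rw [h]; exact ⟨by omega, by omega⟩
      · have hu' : u = v + 1 := by omega
        have hs := hgstep v (by omega)
        rw [hu']
        exact ⟨by omega, by omega⟩
    · intro b1 b2 hb1 hb2 hadj
      obtain ⟨ha1, ha2⟩ := hadj
      rcases Nat.lt_trichotomy b1 b2 with h | h | h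
      · have hb2' : b2 = b1 + 1 := by omega
        obtain ⟨t, ht, h1, h2⟩ := walk_cross T (nM'-1) (fun t => κc (y t)) hg0 hgT hgstep b1 (by omega)
        exact ⟨t, t+1, by omega, by omega, ⟨by omega, by omega⟩, h1,
          by show κc (y (t+1)) = b2; omega⟩
      · obtain ⟨t, ht, h1⟩ := walk_hit T (nM'-1) (fun t => κc (y t)) hg0 hgT hgstep b1 (by omega)
        exact ⟨t, t, by omega, by omega, ⟨by omega, by omega⟩, h1,
          by show κc (y t) = b2; omega⟩
      · have hb1' : b1 = b2 + 1 := by omega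
        obtain ⟨t, ht, h1, h2⟩ := walk_cross T (nM'-1) (fun t => κc (y t)) hg0 hgT hgstep b2 (by omega)
        exact ⟨t+1, t, by omega, by omega, ⟨by omega, by omega⟩,
          by show κc (y (t+1)) = b1; omega, h1⟩
  case _ => -- commuting
    intro j hj
    obtain ⟨hxj, hyj, hco⟩ := hmemT j (by omega)
    obtain ⟨k1, k2, k3⟩ := hfib (x j) hxj
    obtain ⟨k1', k2', k3'⟩ := hfib' (y j) hyj
    show f (κb (x j)) = f' (κc (y j))
    omega
  case _ => show κb (x 0) = 0; rw [hx0, hκb0]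
  case _ => show κc (y 0) = 0; rw [hy0, hκc0]
  case _ => show κb (x (T + 1 - 1)) = nM - 1
            have : T + 1 - 1 = T := by omega
            rw [this, hxT, hκbT]
  case _ => show κc (y (T + 1 - 1)) = nM' - 1
            have : T + 1 - 1 = T := by omega
            rw [this, hyT, hκcT]
end

section
/- Let L be a finite reflexive path graph. An L-type is a maximal chain (under inclusion) of connected subsets (subintervals) of L. For an epimorphism f : M → L of finite path graphs and an endpoint m of M, tp^m(f) := { f[M'] : M' ⊆ M an initial subinterval containing m } is an L-type. -/
/-- A nonempty interval (connected subset) of the path graph on `[0, n)`. -/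
def IsPathInterval (n : ℕ) (S : Set ℕ) : Prop :=
  S.Nonempty ∧ S ⊆ Set.Iio n ∧ ∀ a b c : ℕ, a ∈ S → c ∈ S → a ≤ b → b ≤ c → b ∈ S

/-- An `L`-type on the path graph `[0, n)`: a family of intervals, linearly ordered by
inclusion, which is maximal among such families. -/
def IsPathType (n : ℕ) (t : Set (Set ℕ)) : Prop :=
  (∀ S ∈ t, IsPathInterval n S) ∧ IsChain (· ⊆ ·) t ∧
    ∀ t' : Set (Set ℕ), t ⊆ t' → (∀ S ∈ t', IsPathInterval n S) →
      IsChain (· ⊆ ·) t' → t' = t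

/-- The type of the endpoint `0` of `[0, nM)` with respect to `f`: the family of images
of initial subintervals containing `0`. -/
def tpZero (nM : ℕ) (f : ℕ → ℕ) : Set (Set ℕ) :=
  { S | ∃ k, 1 ≤ k ∧ k ≤ nM ∧ S = f '' Set.Iio k }

section aux
variable {nL nM : ℕ} {f : ℕ → ℕ}

lemma step_bound (hf : IsPathEpi nM nL f) {x : ℕ} (hx : x + 1 < nM) :
    f x ≤ f (x+1) + 1 ∧ f (x+1) ≤ f x + 1 :=
  hf.2.1 x (x+1) (by omega) hx ⟨by omega, by omega⟩

lemma ivt_up (hf : IsPathEpi nM nL f) :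
    ∀ j i b, i ≤ j → j < nM → f i ≤ b → b ≤ f j → ∃ x, i ≤ x ∧ x ≤ j ∧ f x = b := by
  intro j
  induction j with
  | zero =>
    intro i b hij _ h1 h2
    obtain rfl : i = 0 := by omega
    exact ⟨0, by omega, by omega, by omega⟩
  | succ j ih =>
    intro i b hij hj h1 h2
    rcases eq_or_lt_of_le hij with rfl | hij'
    · exact ⟨j+1, le_refl _, le_refl _, by omega⟩
    · by_cases hb : b ≤ f j
      · obtain ⟨x, hx1, hx2, hx3⟩ := ih i b (by omega) (by omega) h1 hb
        exact ⟨x, hx1, by omega, hx3⟩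
      · have := step_bound hf hj
        exact ⟨j+1, by omega, le_refl _, by omega⟩

lemma ivt_down (hf : IsPathEpi nM nL f) :
    ∀ j i b, i ≤ j → j < nM → f j ≤ b → b ≤ f i → ∃ x, i ≤ x ∧ x ≤ j ∧ f x = b := by
  intro j
  induction j with
  | zero =>
    intro i b hij _ h1 h2
    obtain rfl : i = 0 := by omega
    exact ⟨0, by omega, by omega, by omega⟩
  | succ j ih =>
    intro i b hij hj h1 h2
    rcases eq_or_lt_of_le hij with rfl | hij'
    · exact ⟨j+1, le_refl _, le_refl _, by omega⟩
    · by_cases hb : f j ≤ b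
      · obtain ⟨x, hx1, hx2, hx3⟩ := ih i b (by omega) (by omega) hb h2
        exact ⟨x, hx1, by omega, hx3⟩
      · have := step_bound hf hj
        exact ⟨j+1, by omega, le_refl _, by omega⟩

lemma image_interval (hf : IsPathEpi nM nL f) {k : ℕ} (hk1 : 1 ≤ k) (hk2 : k ≤ nM) :
    IsPathInterval nL (f '' Set.Iio k) := by
  refine ⟨⟨f 0, ⟨0, Set.mem_Iio.mpr (by omega), rfl⟩⟩, ?_, ?_⟩
  · rintro _ ⟨a, ha, rfl⟩
    exact hf.1 a (lt_of_lt_of_le (Set.mem_Iio.mp ha) hk2)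
  · rintro _ b _ ⟨i, hi, rfl⟩ ⟨j, hj, rfl⟩ hab hbc
    simp only [Set.mem_Iio] at hi hj
    rcases le_total i j with h | h
    · obtain ⟨x, hx1, hx2, hx3⟩ := ivt_up hf j i b h (by omega) hab hbc
      exact ⟨x, by simp; omega, hx3⟩
    · obtain ⟨x, hx1, hx2, hx3⟩ := ivt_down hf i j b h (by omega) hab hbc
      exact ⟨x, by simp; omega, hx3⟩

lemma image_top (hf : IsPathEpi nM nL f) (hnM : 1 ≤ nM) :
    f '' Set.Iio nM = Set.Iio nL := by
  ext b
  constructor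
  · rintro ⟨a, ha, rfl⟩; exact hf.1 a (by simpa using ha)
  · intro hb
    obtain ⟨x, y, hx, hy, _, hfx, _⟩ := hf.2.2 b b hb hb ⟨by omega, by omega⟩
    exact ⟨x, by simpa using hx, hfx⟩

end aux

theorem stmt12 (nL nM : ℕ) (hnL : 1 ≤ nL) (hnM : 1 ≤ nM)
    (f : ℕ → ℕ) (hf : IsPathEpi nM nL f) :
    IsPathType nL (tpZero nM f) := by
  classical
  refine ⟨?_, ?_, ?_⟩
  · rintro S ⟨k, hk1, hk2, rfl⟩
    exact image_interval hf hk1 hk2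
  · rintro S ⟨k1, hk11, hk12, rfl⟩ T ⟨k2, hk21, hk22, rfl⟩ _
    rcases le_total k1 k2 with h | h
    · exact Or.inl (Set.image_mono (Set.Iio_subset_Iio h))
    · exact Or.inr (Set.image_mono (Set.Iio_subset_Iio h))
  · intro t' hsub hint hchain
    refine Set.Subset.antisymm ?_ hsub
    intro S hS
    obtain ⟨hSne, hSsub, _⟩ := hint S hS
    have hTmem : ∀ k, 1 ≤ k → k ≤ nM → f '' Set.Iio k ∈ t' := fun k h1 h2 =>
      hsub ⟨k, h1, h2, rfl⟩
    have hone : f '' Set.Iio 1 = {f 0} := by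
      have : Set.Iio 1 = ({0} : Set ℕ) := by ext x; simp [Nat.lt_one_iff]
      rw [this, Set.image_singleton]
    -- comparability with each T k
    have hcomp : ∀ k, 1 ≤ k → k ≤ nM → S ⊆ f '' Set.Iio k ∨ f '' Set.Iio k ⊆ S := by
      intro k h1 h2
      by_cases he : S = f '' Set.Iio k
      · exact Or.inl he.subset
      · exact hchain hS (hTmem k h1 h2) he
    by_cases h1 : S ⊆ f '' Set.Iio 1
    · have : S = f '' Set.Iio 1 := by
        rw [hone] at h1 ⊢
        exact (Set.Nonempty.subset_singleton_iff hSne).mp h1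
      exact ⟨1, le_refl _, hnM, this⟩
    · have hT1 : f '' Set.Iio 1 ⊆ S := (hcomp 1 (le_refl _) hnM).resolve_left h1
      set P : ℕ → Prop := fun k => f '' Set.Iio k ⊆ S with hP
      set k := Nat.findGreatest P nM with hkdef
      have hk1 : 1 ≤ k := Nat.le_findGreatest hnM hT1
      have hkle : k ≤ nM := Nat.findGreatest_le nM
      have hkS : f '' Set.Iio k ⊆ S := Nat.findGreatest_spec (P := P) (m := 1) hnM hT1
      rcases eq_or_lt_of_le hkle with heq | hlt
      · refine ⟨nM, hnM, le_refl _, ?_⟩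
        rw [image_top hf hnM]
        refine Set.Subset.antisymm hSsub ?_
        rw [← image_top hf hnM, ← heq]
        exact hkS
      · have hnot : ¬ P (k + 1) := Nat.findGreatest_is_greatest (show Nat.findGreatest P nM < k + 1 by omega) (by omega)
        have hSsub' : S ⊆ f '' Set.Iio (k + 1) :=
          (hcomp (k+1) (by omega) (by omega)).resolve_right hnot
        have hins : f '' Set.Iio (k + 1) = insert (f k) (f '' Set.Iio k) := by
          have : Set.Iio (k + 1) = insert k (Set.Iio k) := by ext x; simp
          rw [this, Set.image_insert_eq]
        by_cases hfk : f k ∈ S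
        · refine ⟨k + 1, by omega, by omega, ?_⟩
          refine Set.Subset.antisymm hSsub' ?_
          rw [hins]
          exact Set.insert_subset hfk hkS
        · refine ⟨k, hk1, by omega, ?_⟩
          refine Set.Subset.antisymm ?_ hkS
          intro x hx
          have := hSsub' hx
          rw [hins] at this
          rcases this with h | h
          · exact absurd (h ▸ hx) hfk
          · exact h
end

section
/- Let J, L be finite reflexive path graphs, f : J → L an epimorphism, and suppose every fiber f^{-1}(b) is a union of intervals each containing at least 3 vertices. Then for all a, b ∈ J, if a and b are at path-distance at most 3 (a R^3 b), then f(a) and f(b) are adjacent in L (|f(a) - f(b)| ≤ 1). -/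
theorem stmt16 (nJ nL : ℕ) (hnJ : 1 ≤ nJ) (hnL : 1 ≤ nL)
    (f : ℕ → ℕ) (hf : IsPathEpi nJ nL f)
    (hfib : ∀ a, a < nJ → ∃ i j : ℕ, i ≤ a ∧ a ≤ j ∧ j < nJ ∧ i + 2 ≤ j ∧
      ∀ c, i ≤ c → c ≤ j → f c = f a) :
    ∀ a b, a < nJ → b < nJ → a ≤ b + 3 → b ≤ a + 3 →
      f a ≤ f b + 1 ∧ f b ≤ f a + 1 := by
  obtain ⟨hmap, hadj, hsur⟩ := hf
  have key : ∀ a b c : ℕ, a < c → c < b → b ≤ a + 3 → c < nJ → b < nJ →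
      f a ≠ f c → f b ≠ f c → False := by
    intro a b c hac hcb hb3 hc hbn hfa hfb
    obtain ⟨i, j, hi, hj, hjn, hij, hconst⟩ := hfib c hc
    have hia : a + 1 ≤ i := by
      by_contra h
      exact hfa (hconst a (by omega) (by omega))
    exact hfb (hconst b (by omega) (by omega))
  have step : ∀ x, x + 1 < nJ → f x ≤ f (x + 1) + 1 ∧ f (x + 1) ≤ f x + 1 := by
    intro x hx
    exact hadj x (x + 1) (by omega) hx ⟨by omega, by omega⟩
  have main : ∀ a b, a < nJ → b < nJ → a ≤ b → b ≤ a + 3 →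
      f a ≤ f b + 1 ∧ f b ≤ f a + 1 := by
    intro a b ha hb hab hb3
    by_contra hcon
    push_neg at hcon
    have hb2 : a + 2 ≤ b := by
      rcases Nat.eq_or_lt_of_le hab with rfl | h'
      · omega
      by_contra h
      have hb1 : b = a + 1 := by omega
      subst hb1
      have := step a hb
      omega
    rcases Nat.eq_or_lt_of_le hb2 with h2 | h3
    · subst h2
      obtain ⟨s1a, s1b⟩ := hadj a (a + 1) (by omega) (by omega) ⟨by omega, by omega⟩
      obtain ⟨s2a, s2b⟩ := hadj (a + 1) (a + 2) (by omega) (by omega) ⟨by omega, by omega⟩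
      exact key a (a + 2) (a + 1) (by omega) (by omega) (by omega) (by omega) hb
        (by omega) (by omega)
    · have hb3' : b = a + 3 := by omega
      subst hb3'
      obtain ⟨s1a, s1b⟩ := hadj a (a + 1) (by omega) (by omega) ⟨by omega, by omega⟩
      obtain ⟨s2a, s2b⟩ := hadj (a + 1) (a + 2) (by omega) (by omega) ⟨by omega, by omega⟩
      obtain ⟨s3a, s3b⟩ := hadj (a + 2) (a + 3) (by omega) (by omega) ⟨by omega, by omega⟩
      by_cases h1 : f (a + 1) = f a
      · exact key a (a + 3) (a + 2) (by omega) (by omega) (by omega) (by omega) hb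
          (by omega) (by omega)
      · exact key a (a + 3) (a + 1) (by omega) (by omega) (by omega) (by omega) hb
          (by omega) (by omega)
  intro a b ha hb hab hba
  rcases le_total a b with h | h
  · exact main a b ha hb h hba
  · exact (main b a hb ha h hab).symm
end
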